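/- If C is a regular Mal'tsev category, then the category Grpd(C) of internal groupoids in C is closed under regular quotients in the category RG(C) of reflexive graphs: if (f0, f1) is a regular epimorphism of reflexive graphs (both f0 and f1 regular epimorphisms in C) whose domain underlies an internal groupoid, then its codomain also underlies an internal groupoid. -/

import Mathlib

open CategoryTheory CategoryTheory.Limits

universe v u v' u'

variable {C : Type u} [Category.{v} C]

/-- An internal relation on an object `X`: a pair of jointly monic morphisms. -/
structure RelOn (X : C) where
  R : C
  r1 : R ⟶ X
  r2 : R ⟶ X
  jmono : ∀ {Z : C} (f g : Z ⟶ R), f ≫ r1 = g ≫ r1 → f ≫ r2 = g ≫ r2 → f = g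

namespace RelOn

variable {X : C} (ρ : RelOn X)

def Reflexive : Prop :=
  ∃ δ : X ⟶ ρ.R, δ ≫ ρ.r1 = 𝟙 X ∧ δ ≫ ρ.r2 = 𝟙 X

def Symmetric : Prop :=
  ∃ σ : ρ.R ⟶ ρ.R, σ ≫ ρ.r1 = ρ.r2 ∧ σ ≫ ρ.r2 = ρ.r1

/-- Transitivity, formulated with generalized elements. -/
def Transitive : Prop :=
  ∀ {Z : C} (a b : Z ⟶ ρ.R), a ≫ ρ.r2 = b ≫ ρ.r1 →
    ∃ t : Z ⟶ ρ.R, t ≫ ρ.r1 = a ≫ ρ.r1 ∧ t ≫ ρ.r2 = b ≫ ρ.r2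

def IsEquivalence : Prop := ρ.Reflexive ∧ ρ.Symmetric ∧ ρ.Transitive

/-- The relation is effective: it is the kernel pair of some morphism. -/
def Effective : Prop :=
  ∃ (Y : C) (f : X ⟶ Y) (h : ρ.r1 ≫ f = ρ.r2 ≫ f),
    Nonempty (IsLimit (PullbackCone.mk ρ.r1 ρ.r2 h))

end RelOn

/-- A Mal'tsev category: every internal reflexive relation is an equivalence relation. -/
class MaltsevCat (C : Type u) [Category.{v} C] : Prop where
  refl_is_equiv : ∀ {X : C} (ρ : RelOn X), ρ.Reflexive → ρ.Symmetric ∧ ρ.Transitive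

/-- A regular category: finitely complete, coequalizers of kernel pairs,
pullback-stable regular epimorphisms. -/
class RegularCat (C : Type u) [Category.{v} C] : Prop where
  hasFiniteLimits : HasFiniteLimits C
  hasCoeqOfKernelPair : ∀ {A B R : C} (f : A ⟶ B) (p1 p2 : R ⟶ A) (h : p1 ≫ f = p2 ≫ f),
    Nonempty (IsLimit (PullbackCone.mk p1 p2 h)) → HasCoequalizer p1 p2
  regEpiStable : ∀ {P A B Z : C} (f : A ⟶ B) (g : Z ⟶ B) (p1 : P ⟶ A) (p2 : P ⟶ Z)
    (h : p1 ≫ f = p2 ≫ g), Nonempty (IsLimit (PullbackCone.mk p1 p2 h)) →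
    Nonempty (RegularEpi f) → Nonempty (RegularEpi p2)

/-- A Barr-exact category: regular and every equivalence relation is effective. -/
class ExactCat (C : Type u) [Category.{v} C] extends RegularCat C : Prop where
  effective : ∀ {X : C} (ρ : RelOn X), ρ.IsEquivalence → ρ.Effective

/-- An internal reflexive graph. -/
structure ReflexiveGraph (C : Type u) [Category.{v} C] where
  C1 : C
  C0 : C
  d : C1 ⟶ C0
  c : C1 ⟶ C0
  e : C0 ⟶ C1
  ed : e ≫ d = 𝟙 C0
  ec : e ≫ c = 𝟙 C0

/-- An internal category structure on a reflexive graph, formulated via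
generalized elements (equivalent to the usual pullback formulation in a
finitely complete category). `comp a b _` is the composite "`a` followed by `b`". -/
structure CatStruct {C : Type u} [Category.{v} C] (G : ReflexiveGraph C) where
  comp : ∀ {Z : C} (a b : Z ⟶ G.C1), a ≫ G.c = b ≫ G.d → (Z ⟶ G.C1)
  comp_natural : ∀ {W Z : C} (w : W ⟶ Z) (a b : Z ⟶ G.C1) (h : a ≫ G.c = b ≫ G.d)
      (h' : (w ≫ a) ≫ G.c = (w ≫ b) ≫ G.d),
      w ≫ comp a b h = comp (w ≫ a) (w ≫ b) h'
  comp_d : ∀ {Z : C} (a b : Z ⟶ G.C1) (h : a ≫ G.c = b ≫ G.d), comp a b h ≫ G.d = a ≫ G.d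
  comp_c : ∀ {Z : C} (a b : Z ⟶ G.C1) (h : a ≫ G.c = b ≫ G.d), comp a b h ≫ G.c = b ≫ G.c
  comp_unit_l : ∀ {Z : C} (a : Z ⟶ G.C1) (h : (a ≫ G.d ≫ G.e) ≫ G.c = a ≫ G.d),
      comp (a ≫ G.d ≫ G.e) a h = a
  comp_unit_r : ∀ {Z : C} (a : Z ⟶ G.C1) (h : a ≫ G.c = (a ≫ G.c ≫ G.e) ≫ G.d),
      comp a (a ≫ G.c ≫ G.e) h = a
  comp_assoc : ∀ {Z : C} (a b c' : Z ⟶ G.C1) (h1 : a ≫ G.c = b ≫ G.d)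
      (h2 : b ≫ G.c = c' ≫ G.d)
      (h3 : comp a b h1 ≫ G.c = c' ≫ G.d)
      (h4 : a ≫ G.c = comp b c' h2 ≫ G.d),
      comp (comp a b h1) c' h3 = comp a (comp b c' h2) h4

/-- The internal category has inverses, i.e. is an internal groupoid. -/
def CatStruct.HasInverses {C : Type u} [Category.{v} C] {G : ReflexiveGraph C}
    (S : CatStruct G) : Prop :=
  ∃ i : G.C1 ⟶ G.C1, i ≫ G.d = G.c ∧ i ≫ G.c = G.d ∧
    (∀ {Z : C} (a : Z ⟶ G.C1) (h : a ≫ G.c = (a ≫ i) ≫ G.d),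
      S.comp a (a ≫ i) h = a ≫ G.d ≫ G.e) ∧
    (∀ {Z : C} (a : Z ⟶ G.C1) (h : (a ≫ i) ≫ G.c = a ≫ G.d),
      S.comp (a ≫ i) a h = a ≫ G.c ≫ G.e)

/-- An internal groupoid. -/
structure GroupoidObj (C : Type u) [Category.{v} C] where
  graph : ReflexiveGraph C
  str : CatStruct graph
  hasInv : str.HasInverses

/-- Internal functors between internal groupoids. -/
@[ext]
structure GrpdHom (A B : GroupoidObj C) where
  f0 : A.graph.C0 ⟶ B.graph.C0
  f1 : A.graph.C1 ⟶ B.graph.C1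
  hd : f1 ≫ B.graph.d = A.graph.d ≫ f0
  hc : f1 ≫ B.graph.c = A.graph.c ≫ f0
  he : A.graph.e ≫ f1 = f0 ≫ B.graph.e
  hm : ∀ {Z : C} (a b : Z ⟶ A.graph.C1) (h : a ≫ A.graph.c = b ≫ A.graph.d)
      (h' : (a ≫ f1) ≫ B.graph.c = (b ≫ f1) ≫ B.graph.d),
      A.str.comp a b h ≫ f1 = B.str.comp (a ≫ f1) (b ≫ f1) h'

lemma GrpdHom.cond {A B : GroupoidObj C} (f : GrpdHom A B) {Z : C} {a b : Z ⟶ A.graph.C1}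
    (h : a ≫ A.graph.c = b ≫ A.graph.d) :
    (a ≫ f.f1) ≫ B.graph.c = (b ≫ f.f1) ≫ B.graph.d := by
  rw [Category.assoc, f.hc, Category.assoc, f.hd, ← Category.assoc, h, Category.assoc]

def GrpdHom.id (A : GroupoidObj C) : GrpdHom A A where
  f0 := 𝟙 _
  f1 := 𝟙 _
  hd := by simp
  hc := by simp
  he := by simp
  hm := by intros; simp

def GrpdHom.comp {A B D : GroupoidObj C} (f : GrpdHom A B) (g : GrpdHom B D) : GrpdHom A D where
  f0 := f.f0 ≫ g.f0
  f1 := f.f1 ≫ g.f1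
  hd := by rw [Category.assoc, g.hd, ← Category.assoc, f.hd, Category.assoc]
  hc := by rw [Category.assoc, g.hc, ← Category.assoc, f.hc, Category.assoc]
  he := by rw [← Category.assoc, f.he, Category.assoc, g.he, ← Category.assoc]
  hm := by
    intro Z a b h h'
    rw [← Category.assoc, f.hm a b h (f.cond h), g.hm _ _ (f.cond h) (g.cond (f.cond h))]
    simp only [Category.assoc]

instance : Category (GroupoidObj C) where
  Hom := GrpdHom
  id := GrpdHom.id
  comp := GrpdHom.comp
  id_comp f := by apply GrpdHom.ext <;> simp [GrpdHom.comp, GrpdHom.id]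
  comp_id f := by apply GrpdHom.ext <;> simp [GrpdHom.comp, GrpdHom.id]
  assoc f g h := by apply GrpdHom.ext <;> simp [GrpdHom.comp]

/-- Coerce a morphism of internal groupoids to its underlying data. -/
def homToGrpdHom {A B : GroupoidObj C} (f : A ⟶ B) : GrpdHom A B := f

/-- Morphisms of reflexive graphs. -/
@[ext]
structure RGHom (A B : ReflexiveGraph C) where
  f0 : A.C0 ⟶ B.C0
  f1 : A.C1 ⟶ B.C1
  hd : f1 ≫ B.d = A.d ≫ f0
  hc : f1 ≫ B.c = A.c ≫ f0
  he : A.e ≫ f1 = f0 ≫ B.e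

instance : Category (ReflexiveGraph C) where
  Hom := RGHom
  id A := ⟨𝟙 _, 𝟙 _, by simp, by simp, by simp⟩
  comp f g := ⟨f.f0 ≫ g.f0, f.f1 ≫ g.f1,
    by rw [Category.assoc, g.hd, ← Category.assoc, f.hd, Category.assoc],
    by rw [Category.assoc, g.hc, ← Category.assoc, f.hc, Category.assoc],
    by rw [← Category.assoc, f.he, Category.assoc, g.he, ← Category.assoc]⟩
  id_comp f := by apply RGHom.ext <;> simp
  comp_id f := by apply RGHom.ext <;> simp
  assoc f g h := by apply RGHom.ext <;> simp

def homToRGHom {A B : ReflexiveGraph C} (f : A ⟶ B) : RGHom A B := f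

/-- The forgetful functor from internal groupoids to reflexive graphs. -/
def forgetToRG (C : Type u) [Category.{v} C] : GroupoidObj C ⥤ ReflexiveGraph C where
  obj A := A.graph
  map f := ⟨(homToGrpdHom f).f0, (homToGrpdHom f).f1, (homToGrpdHom f).hd,
    (homToGrpdHom f).hc, (homToGrpdHom f).he⟩
  map_id A := by apply RGHom.ext <;> rfl
  map_comp f g := by apply RGHom.ext <;> rfl

/-- A discrete internal groupoid: the unit is an isomorphism. -/
def GroupoidObj.IsDiscrete (A : GroupoidObj C) : Prop := IsIso A.graph.e

/-- An internal double groupoid (an internal groupoid in internal groupoids) is a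
2-groupoid when its groupoid of objects is discrete. -/
def Is2Grpd (D : GroupoidObj (GroupoidObj C)) : Prop := D.graph.C0.IsDiscrete

/-- Zero morphisms, defined without extra structure: morphisms factoring through a
zero object. -/
def IsZeroMor {A B : C} (f : A ⟶ B) : Prop :=
  ∃ (Z : C) (_ : IsZero Z) (g : A ⟶ Z) (h : Z ⟶ B), f = g ≫ h

/-- `κ` is a kernel of `α`. -/
def IsKernelOf {A B K : C} (κ : K ⟶ A) (α : A ⟶ B) : Prop :=
  IsZeroMor (κ ≫ α) ∧ ∀ {Z : C} (g : Z ⟶ A), IsZeroMor (g ≫ α) → ∃! l : Z ⟶ K, l ≫ κ = g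

/-- A split extension with kernel object `Xo`. -/
structure SplitExtOn (Xo : C) where
  A : C
  B : C
  κ : Xo ⟶ A
  α : A ⟶ B
  β : B ⟶ A
  split : β ≫ α = 𝟙 B
  ker : IsKernelOf κ α

/-- A generic split extension with kernel `Xo`: terminal among split extensions
with kernel `Xo` (morphisms being the identity on the kernel). -/
def IsGenericSplitExt {Xo : C} (E : SplitExtOn Xo) : Prop :=
  ∀ E' : SplitExtOn Xo, ∃! vw : (E'.A ⟶ E.A) × (E'.B ⟶ E.B),
    E'.κ ≫ vw.1 = E.κ ∧ vw.1 ≫ E.α = E'.α ≫ vw.2 ∧ E'.β ≫ vw.1 = vw.2 ≫ E.β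

/-- Action representability: every object admits a generic split extension. -/
def ActionRepresentable (C : Type u) [Category.{v} C] : Prop :=
  ∀ X : C, ∃ E : SplitExtOn X, IsGenericSplitExt E

/-- A protoadditive functor: preserves kernels of split epimorphisms. -/
def Protoadditive {X : Type u'} [Category.{v'} X] (H : X ⥤ C) : Prop :=
  ∀ {A B K : X} (α : A ⟶ B) (β : B ⟶ A), β ≫ α = 𝟙 B →
    ∀ (κ : K ⟶ A), IsKernelOf κ α → IsKernelOf (H.map κ) (H.map α)

/-- A semi-abelian category: pointed, Barr-exact, protomodular (split short five
lemma), with binary coproducts. -/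
class SemiAbelian (C : Type u) [Category.{v} C] extends ExactCat C : Prop where
  hasZeroObject : HasZeroObject C
  hasBinaryCoproducts : HasBinaryCoproducts C
  ssfl : ∀ {A B B' Co : C} (k : A ⟶ B) (p : B ⟶ Co) (s : Co ⟶ B)
      (k' : A ⟶ B') (p' : B' ⟶ Co) (s' : Co ⟶ B') (b : B ⟶ B'),
      s ≫ p = 𝟙 Co → s' ≫ p' = 𝟙 Co → IsKernelOf k p → IsKernelOf k' p' →
      k ≫ b = k' → b ≫ p' = p → s ≫ b = s' → IsIso b

/-- A natural Mal'tsev operation on a category with binary products. -/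
def IsNaturallyMaltsev (C : Type u) [Category.{v} C] [HasBinaryProducts C] : Prop :=
  ∃ p : ∀ A : C, (A ⨯ A) ⨯ A ⟶ A,
    (∀ {A B : C} (f : A ⟶ B), prod.map (prod.map f f) f ≫ p B = p A ≫ f) ∧
    (∀ A : C, prod.lift (prod.lift prod.fst prod.snd) prod.snd ≫ p A
        = (prod.fst : A ⨯ A ⟶ A)) ∧
    (∀ A : C, prod.lift (prod.lift prod.fst prod.fst) prod.snd ≫ p A
        = (prod.snd : A ⨯ A ⟶ A))

/-!
In a Mal'tsev category every relation is difunctional. Applied to a relation on composable pairs of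
related arrows, this shows that the kernel pair of `f₁` is compatible with the composition of the
groupoid `G`; applied to the image of the comparison map `G₁ → G₀ ×_{H₀} H₁`, it shows that this
map is a regular epimorphism (Bourn's regular pushout property), hence so is the induced map
`G₁ ×_{G₀} G₁ → H₁ ×_{H₀} H₁` on composable pairs. The composition of `G` therefore descends to a
composition on `H`, and the inversion descends along `f₁`. Each groupoid axiom for `H` can be
checked after covering generalised elements of `H` by elements of `G` through pullbacks of these
regular epimorphisms, where it becomes the corresponding axiom of `G`.
-/

attribute [local simp] pullback.lift_fst pullback.lift_snd pullback.lift_fst_assoc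
  pullback.lift_snd_assoc prod.lift_fst prod.lift_snd prod.lift_fst_assoc prod.lift_snd_assoc

instance RegularCat.regular [RegularCat C] : Regular C where
  toHasFiniteLimits := RegularCat.hasFiniteLimits
  hasCoequalizer_of_isKernelPair h := RegularCat.hasCoeqOfKernelPair _ _ _ h.w h.isLimit'
  regularEpiIsStableUnderBaseChange :=
    ⟨fun sq ⟨hg⟩ ↦ ⟨RegularCat.regEpiStable _ _ _ _ sq.w sq.isLimit' hg⟩⟩

theorem Regular.isRegularEpi_of_isPullback [Regular C] {P X Y Z : C} {fst : P ⟶ X}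
    {snd : P ⟶ Y} {f : X ⟶ Z} {g : Y ⟶ Z} (sq : IsPullback fst snd f g) [IsRegularEpi f] :
    IsRegularEpi snd :=
  Regular.regularEpiIsStableUnderBaseChange.of_isPullback sq ‹_›

theorem Regular.exists_epi_cover [Regular C] {A B Z : C} (p : A ⟶ B) [IsRegularEpi p]
    (z : Z ⟶ B) : ∃ (P : C) (ρ : P ⟶ Z) (x : P ⟶ A), Epi ρ ∧ x ≫ p = ρ ≫ z :=
  ⟨pullback p z, pullback.snd p z, pullback.fst p z, inferInstance, pullback.condition⟩

theorem comp_pullback_lift [HasPullbacks C] {X Y Z V W : C} {f : X ⟶ Z} {g : Y ⟶ Z}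
    (w : W ⟶ V) {a : V ⟶ X} {b : V ⟶ Y} (h : a ≫ f = b ≫ g) :
    w ≫ pullback.lift a b h = pullback.lift (w ≫ a) (w ≫ b) (by simp [h]) := by
  ext <;> simp

theorem MaltsevCat.difunctional [HasPullbacks C] [MaltsevCat C] {X Y R : C} {r₁ : R ⟶ X}
    {r₂ : R ⟶ Y} (jm : ∀ {Z : C} (a b : Z ⟶ R), a ≫ r₁ = b ≫ r₁ → a ≫ r₂ = b ≫ r₂ → a = b)
    {Z : C} (x y z : Z ⟶ R) (hxy : x ≫ r₂ = y ≫ r₂) (hyz : y ≫ r₁ = z ≫ r₁) :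
    ∃ t : Z ⟶ R, t ≫ r₁ = x ≫ r₁ ∧ t ≫ r₂ = z ≫ r₂ := by
  -- the relation on `R` relating `a` and `b` when some `k` has `k r₁ = a r₁` and `k r₂ = b r₂`
  let K := pullback (pullback.snd r₁ r₁ ≫ r₂) r₂
  let s₁ : K ⟶ R := pullback.fst _ _ ≫ pullback.fst _ _
  let k : K ⟶ R := pullback.fst _ _ ≫ pullback.snd _ _
  let s₂ : K ⟶ R := pullback.snd _ _
  have hk₁ : k ≫ r₁ = s₁ ≫ r₁ := by simp [k, s₁, pullback.condition]
  have hk₂ : k ≫ r₂ = s₂ ≫ r₂ := by simp [k, s₂, pullback.condition]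
  let ρ : RelOn R := ⟨K, s₁, s₂, fun a b h₁ h₂ ↦ by
    have hk : a ≫ k = b ≫ k := jm _ _ (by simp only [Category.assoc, hk₁, reassoc_of% h₁])
      (by simp only [Category.assoc, hk₂, reassoc_of% h₂])
    exact pullback.hom_ext (pullback.hom_ext (by simpa using h₁) (by simpa using hk))
      (by simpa using h₂)⟩
  have hrefl : ρ.Reflexive := ⟨pullback.lift (pullback.lift (𝟙 R) (𝟙 R) rfl) (𝟙 R) (by simp),
    by simp [ρ, s₁], by simp [ρ, s₂]⟩
  obtain ⟨⟨σ, hσ₁, hσ₂⟩, htrans⟩ := MaltsevCat.refl_is_equiv ρ hrefl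
  let yx : Z ⟶ K := pullback.lift (pullback.lift y y rfl) x (by simpa using hxy.symm)
  let yz : Z ⟶ K := pullback.lift (pullback.lift y z hyz) z (by simp)
  obtain ⟨t, ht₁, ht₂⟩ := htrans (yx ≫ σ) yz (by simp [ρ, hσ₂, yx, yz, s₁])
  refine ⟨t ≫ k, ?_, ?_⟩
  · simpa [hk₁, hσ₁, ρ, yx, s₂] using ht₁ =≫ r₁
  · simpa [hk₂, ρ, yz, s₂] using ht₂ =≫ r₂

/-- The regular pushout property of regular Mal'tsev categories (Bourn). -/
theorem MaltsevCat.isRegularEpi_pullback_lift [Regular C] [MaltsevCat C] {A A₀ B B₀ : C}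
    {u : A ⟶ A₀} {s : A₀ ⟶ A} (hsu : s ≫ u = 𝟙 A₀) {v : B ⟶ B₀} {t : B₀ ⟶ B} {w : A ⟶ B}
    {w₀ : A₀ ⟶ B₀} [IsRegularEpi w] (sq : u ≫ w₀ = w ≫ v) (hs : s ≫ w = w₀ ≫ t) :
    IsRegularEpi (pullback.lift u w sq : A ⟶ pullback w₀ v) := by
  let F := Regular.strongEpiMonoFactorisation (pullback.lift u w sq : A ⟶ pullback w₀ v)
  suffices IsIso F.m by rw [← F.fac]; infer_instance
  have he₀ : F.e ≫ F.m ≫ pullback.fst w₀ v = u := by simp [reassoc_of% F.fac]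
  have he₁ : F.e ≫ F.m ≫ pullback.snd w₀ v = w := by simp [reassoc_of% F.fac]
  let g := pullback.fst w (pullback.snd w₀ v)
  let ρ := pullback.snd w (pullback.snd w₀ v)
  have hg : g ≫ w = ρ ≫ pullback.snd w₀ v := pullback.condition
  -- difunctionality makes the regular epimorphism `ρ` factor through the monomorphism `F.m`
  obtain ⟨τ, hτ₀, hτ₁⟩ := MaltsevCat.difunctional (r₁ := F.m ≫ pullback.fst w₀ v)
    (r₂ := F.m ≫ pullback.snd w₀ v)
    (fun a b h₀ h₁ ↦ (cancel_mono F.m).1 (pullback.hom_ext (by simpa using h₀) (by simpa using h₁)))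
    ((ρ ≫ pullback.fst w₀ v ≫ s) ≫ F.e) ((g ≫ u ≫ s) ≫ F.e) (g ≫ F.e)
    (by simp [he₁, hs, reassoc_of% sq, reassoc_of% hg, pullback.condition_assoc])
    (by simp [he₀, hsu])
  have hτ : τ ≫ F.m = ρ := pullback.hom_ext (by simpa [he₀, hsu] using hτ₀)
    (by simpa [he₁, hg] using hτ₁)
  have : StrongEpi (τ ≫ F.m) := by rw [hτ]; infer_instance
  have := strongEpi_of_strongEpi τ F.m
  exact isIso_of_mono_of_strongEpi F.m

namespace CatStruct

variable {G : ReflexiveGraph C} (S : CatStruct G)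

theorem comp_congr {Z : C} {a a' b b' : Z ⟶ G.C1} (ha : a = a') (hb : b = b')
    (h : a ≫ G.c = b ≫ G.d) (h' : a' ≫ G.c = b' ≫ G.d) : S.comp a b h = S.comp a' b' h' := by
  subst ha hb; rfl

theorem comp_id_left {Z : C} {a b : Z ⟶ G.C1} (x : Z ⟶ G.C1) (ha : a = x ≫ G.d ≫ G.e)
    (h : a ≫ G.c = b ≫ G.d) : S.comp a b h = b := by
  have hx : x ≫ G.d = b ≫ G.d := by simpa [ha, G.ec] using h
  subst ha
  rw [S.comp_congr (by rw [reassoc_of% hx]) rfl h (by simp [G.ec]), S.comp_unit_l]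

theorem comp_id_right {Z : C} {a b : Z ⟶ G.C1} (x : Z ⟶ G.C1) (hb : b = x ≫ G.c ≫ G.e)
    (h : a ≫ G.c = b ≫ G.d) : S.comp a b h = a := by
  have hx : x ≫ G.c = a ≫ G.c := by simpa [hb, G.ed] using h.symm
  subst hb
  rw [S.comp_congr rfl (by rw [reassoc_of% hx]) h (by simp [G.ed]), S.comp_unit_r]

theorem cancel_left (hS : S.HasInverses) {Z : C} {x y y' : Z ⟶ G.C1} (h : x ≫ G.c = y ≫ G.d)
    (h' : x ≫ G.c = y' ≫ G.d) (heq : S.comp x y h = S.comp x y' h') : y = y' := by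
  obtain ⟨i, -, hic, -, hinv⟩ := hS
  have hxi : (x ≫ i) ≫ G.c = x ≫ G.d := by rw [Category.assoc, hic]
  have key : ∀ (y : Z ⟶ G.C1) (h : x ≫ G.c = y ≫ G.d),
      y = S.comp (x ≫ i) (S.comp x y h) (by rw [hxi, S.comp_d]) := by
    intro y h
    calc y = S.comp (y ≫ G.d ≫ G.e) y (by simp [G.ec]) := (S.comp_unit_l y _).symm
      _ = S.comp (S.comp (x ≫ i) x hxi) y (by rw [S.comp_c, h]) :=
          S.comp_congr (by rw [hinv, reassoc_of% h]) rfl _ _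
      _ = _ := S.comp_assoc _ _ _ _ _ _ _
  rw [key y h, key y' h']
  exact S.comp_congr rfl heq _ _

theorem left_inv_eq_right_inv {Z : C} {a v v' : Z ⟶ G.C1} (hv : a ≫ G.c = v ≫ G.d)
    (hv' : v' ≫ G.c = a ≫ G.d) (hav : S.comp a v hv = a ≫ G.d ≫ G.e)
    (hva : S.comp v' a hv' = a ≫ G.c ≫ G.e) : v' = v :=
  calc v' = S.comp v' (v' ≫ G.c ≫ G.e) (by simp [G.ed]) := (S.comp_unit_r v' _).symm
    _ = S.comp v' (S.comp a v hv) (by rw [S.comp_d, hv']) :=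
        S.comp_congr rfl (by rw [hav, reassoc_of% hv']) _ _
    _ = S.comp (S.comp v' a hv') v (by rw [S.comp_c, hv]) := (S.comp_assoc _ _ _ _ _ _ _).symm
    _ = S.comp (v ≫ G.d ≫ G.e) v (by simp [G.ec]) :=
        S.comp_congr (by rw [hva, reassoc_of% hv]) rfl _ _
    _ = v := S.comp_unit_l v _

end CatStruct

namespace RGHom

variable {G H : ReflexiveGraph C} (f : RGHom G H)

theorem composable {Z : C} {x y : Z ⟶ G.C1} (h : x ≫ G.c = y ≫ G.d) :
    (x ≫ f.f1) ≫ H.c = (y ≫ f.f1) ≫ H.d := by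
  simp only [Category.assoc, f.hc, f.hd, reassoc_of% h]

theorem d_e_comp : G.d ≫ G.e ≫ f.f1 = f.f1 ≫ H.d ≫ H.e := by
  rw [f.he, reassoc_of% f.hd]

theorem c_e_comp : G.c ≫ G.e ≫ f.f1 = f.f1 ≫ H.c ≫ H.e := by
  rw [f.he, reassoc_of% f.hc]

/-- `f` is an internal functor from `S` to `T`. -/
def PreservesComp (S : CatStruct G) (T : CatStruct H) : Prop :=
  ∀ {Z : C} (x y : Z ⟶ G.C1) (h : x ≫ G.c = y ≫ G.d) (h' : (x ≫ f.f1) ≫ H.c = (y ≫ f.f1) ≫ H.d),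
    T.comp (x ≫ f.f1) (y ≫ f.f1) h' = S.comp x y h ≫ f.f1

variable {f} in
theorem PreservesComp.comp_eq {S : CatStruct G} {T : CatStruct H} (hf : f.PreservesComp S T)
    {Z : C} {x y : Z ⟶ G.C1} (h : x ≫ G.c = y ≫ G.d) {a b : Z ⟶ H.C1}
    (hab : a ≫ H.c = b ≫ H.d) (ha : x ≫ f.f1 = a) (hb : y ≫ f.f1 = b) :
    T.comp a b hab = S.comp x y h ≫ f.f1 := by
  subst ha hb
  exact hf x y h hab

end RGHom

namespace RelOn

variable [HasFiniteLimits C] {G : ReflexiveGraph C} (ρ : RelOn G.C1)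

noncomputable def sources : ρ.R ⟶ G.C0 ⨯ G.C0 := prod.lift (ρ.r1 ≫ G.d) (ρ.r2 ≫ G.d)

noncomputable def targets : ρ.R ⟶ G.C0 ⨯ G.C0 := prod.lift (ρ.r1 ≫ G.c) (ρ.r2 ≫ G.c)

variable {ρ} in
theorem targets_eq_sources_iff {Z : C} {k l : Z ⟶ ρ.R} : k ≫ ρ.targets = l ≫ ρ.sources ↔
    (k ≫ ρ.r1) ≫ G.c = (l ≫ ρ.r1) ≫ G.d ∧ (k ≫ ρ.r2) ≫ G.c = (l ≫ ρ.r2) ≫ G.d := by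
  refine ⟨fun h ↦ ⟨by simpa [targets, sources] using h =≫ prod.fst,
    by simpa [targets, sources] using h =≫ prod.snd⟩, fun h ↦ ?_⟩
  ext
  · simpa [targets, sources] using h.1
  · simpa [targets, sources] using h.2

theorem composable_r1 :
    (pullback.fst ρ.targets ρ.sources ≫ ρ.r1) ≫ G.c = (pullback.snd _ _ ≫ ρ.r1) ≫ G.d :=
  (targets_eq_sources_iff.1 pullback.condition).1

theorem composable_r2 :
    (pullback.fst ρ.targets ρ.sources ≫ ρ.r2) ≫ G.c = (pullback.snd _ _ ≫ ρ.r2) ≫ G.d :=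
  (targets_eq_sources_iff.1 pullback.condition).2

end RelOn

namespace CatStruct

variable [HasFiniteLimits C] {G : ReflexiveGraph C} (S : CatStruct G) (ρ : RelOn G.C1)

noncomputable def relComp : pullback ρ.targets ρ.sources ⟶ G.C1 ⨯ G.C1 :=
  prod.lift (S.comp _ _ ρ.composable_r1) (S.comp _ _ ρ.composable_r2)

theorem comp_relComp {W : C} (F : W ⟶ pullback ρ.targets ρ.sources) :
    F ≫ S.relComp ρ = prod.lift
      (S.comp (F ≫ pullback.fst _ _ ≫ ρ.r1) (F ≫ pullback.snd _ _ ≫ ρ.r1)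
        (by simp only [Category.assoc, ← ρ.composable_r1]))
      (S.comp (F ≫ pullback.fst _ _ ≫ ρ.r2) (F ≫ pullback.snd _ _ ≫ ρ.r2)
        (by simp only [Category.assoc, ← ρ.composable_r2])) := by
  apply prod.hom_ext <;> simp only [relComp, Category.assoc, prod.lift_fst, prod.lift_snd] <;>
    exact S.comp_natural _ _ _ _ _

theorem relComp_jointly_mono (hS : S.HasInverses) {W : C}
    (F F' : W ⟶ pullback ρ.targets ρ.sources) (h : F ≫ pullback.fst _ _ = F' ≫ pullback.fst _ _)
    (h' : F ≫ S.relComp ρ = F' ≫ S.relComp ρ) : F = F' := by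
  have e₁ := h' =≫ prod.fst
  have e₂ := h' =≫ prod.snd
  simp only [comp_relComp, prod.lift_fst, prod.lift_snd, ← Category.assoc, h] at e₁ e₂
  exact pullback.hom_ext h (ρ.jmono _ _ (by simpa using S.cancel_left hS _ _ e₁)
    (by simpa using S.cancel_left hS _ _ e₂))

theorem exists_comp_of_rel [MaltsevCat C] (hS : S.HasInverses)
    (hd : ∃ δ : ρ.R ⟶ ρ.R, δ ≫ ρ.r1 = ρ.r1 ≫ G.d ≫ G.e ∧ δ ≫ ρ.r2 = ρ.r2 ≫ G.d ≫ G.e)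
    (hc : ∃ δ : ρ.R ⟶ ρ.R, δ ≫ ρ.r1 = ρ.r1 ≫ G.c ≫ G.e ∧ δ ≫ ρ.r2 = ρ.r2 ≫ G.c ≫ G.e)
    {Z : C} (k l : Z ⟶ ρ.R) (h₁ : (k ≫ ρ.r1) ≫ G.c = (l ≫ ρ.r1) ≫ G.d)
    (h₂ : (k ≫ ρ.r2) ≫ G.c = (l ≫ ρ.r2) ≫ G.d) :
    ∃ n : Z ⟶ ρ.R, n ≫ ρ.r1 = S.comp _ _ h₁ ∧ n ≫ ρ.r2 = S.comp _ _ h₂ := by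
  obtain ⟨δd, hδd₁, hδd₂⟩ := hd
  obtain ⟨δc, hδc₁, hδc₂⟩ := hc
  -- `U = (1_{d k}, k)` and `V = (k, 1_{c k})` have the same composites, `V` and `W = (k, l)`
  -- the same first component, so difunctionality yields a pair with first component `1_{d k}`
  -- and the composites of `W`; its second component is then the composite of `k` and `l`
  let U := pullback.lift (f := ρ.targets) (g := ρ.sources) (k ≫ δd) k
    (RelOn.targets_eq_sources_iff.2 ⟨by simp [hδd₁, G.ec], by simp [hδd₂, G.ec]⟩)
  let V := pullback.lift (f := ρ.targets) (g := ρ.sources) k (k ≫ δc)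
    (RelOn.targets_eq_sources_iff.2 ⟨by simp [hδc₁, G.ed], by simp [hδc₂, G.ed]⟩)
  let W := pullback.lift (f := ρ.targets) (g := ρ.sources) k l
    (RelOn.targets_eq_sources_iff.2 ⟨h₁, h₂⟩)
  have hUV : U ≫ S.relComp ρ = V ≫ S.relComp ρ := by
    rw [comp_relComp, comp_relComp]
    congr 1
    · rw [S.comp_id_left (k ≫ ρ.r1) (by simp [U, hδd₁]),
        S.comp_id_right (k ≫ ρ.r1) (by simp [V, hδc₁])]
      simp [U, V]
    · rw [S.comp_id_left (k ≫ ρ.r2) (by simp [U, hδd₂]),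
        S.comp_id_right (k ≫ ρ.r2) (by simp [V, hδc₂])]
      simp [U, V]
  obtain ⟨τ, hτ, hτW⟩ :=
    MaltsevCat.difunctional (S.relComp_jointly_mono ρ hS) U V W hUV (by simp [V, W])
  rw [comp_relComp, comp_relComp] at hτW
  refine ⟨τ ≫ pullback.snd _ _, ?_, ?_⟩
  · have := hτW =≫ prod.fst
    rw [prod.lift_fst, prod.lift_fst, S.comp_id_left (k ≫ ρ.r1) (by simp [reassoc_of% hτ, U, hδd₁]),
      S.comp_congr (by simp [W]) (by simp [W]) _ h₁] at this
    simpa using this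
  · have := hτW =≫ prod.snd
    rw [prod.lift_snd, prod.lift_snd, S.comp_id_left (k ≫ ρ.r2) (by simp [reassoc_of% hτ, U, hδd₂]),
      S.comp_congr (by simp [W]) (by simp [W]) _ h₂] at this
    simpa using this

theorem comp_map_congr [MaltsevCat C] (hS : S.HasInverses) {H : ReflexiveGraph C}
    (f : RGHom G H) {Z : C} {s t s' t' : Z ⟶ G.C1} (h : s ≫ G.c = t ≫ G.d)
    (h' : s' ≫ G.c = t' ≫ G.d) (hs : s ≫ f.f1 = s' ≫ f.f1) (ht : t ≫ f.f1 = t' ≫ f.f1) :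
    S.comp s t h ≫ f.f1 = S.comp s' t' h' ≫ f.f1 := by
  let ρ : RelOn G.C1 := ⟨pullback f.f1 f.f1, pullback.fst _ _, pullback.snd _ _,
    fun _ _ h₁ h₂ ↦ pullback.hom_ext h₁ h₂⟩
  have hd : ∃ δ : ρ.R ⟶ ρ.R, δ ≫ ρ.r1 = ρ.r1 ≫ G.d ≫ G.e ∧ δ ≫ ρ.r2 = ρ.r2 ≫ G.d ≫ G.e :=
    ⟨pullback.lift (pullback.fst _ _ ≫ G.d ≫ G.e) (pullback.snd _ _ ≫ G.d ≫ G.e)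
      (by simp [f.d_e_comp, pullback.condition_assoc]), by simp [ρ], by simp [ρ]⟩
  have hc : ∃ δ : ρ.R ⟶ ρ.R, δ ≫ ρ.r1 = ρ.r1 ≫ G.c ≫ G.e ∧ δ ≫ ρ.r2 = ρ.r2 ≫ G.c ≫ G.e :=
    ⟨pullback.lift (pullback.fst _ _ ≫ G.c ≫ G.e) (pullback.snd _ _ ≫ G.c ≫ G.e)
      (by simp [f.c_e_comp, pullback.condition_assoc]), by simp [ρ], by simp [ρ]⟩
  obtain ⟨n, hn₁, hn₂⟩ := S.exists_comp_of_rel ρ hS hd hc (pullback.lift s s' hs)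
    (pullback.lift t t' ht) (by simpa [ρ] using h) (by simpa [ρ] using h')
  have e₁ : n ≫ pullback.fst _ _ = S.comp s t h :=
    hn₁.trans (S.comp_congr (by simp [ρ]) (by simp [ρ]) _ h)
  have e₂ : n ≫ pullback.snd _ _ = S.comp s' t' h' :=
    hn₂.trans (S.comp_congr (by simp [ρ]) (by simp [ρ]) _ h')
  rw [← e₁, ← e₂, Category.assoc, Category.assoc, pullback.condition]

end CatStruct

namespace RGHom

variable {G H : ReflexiveGraph C} (f : RGHom G H)

noncomputable def map₂ [HasPullbacks C] : pullback G.c G.d ⟶ pullback H.c H.d :=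
  pullback.map G.c G.d H.c H.d f.f1 f.f1 f.f0 f.hc.symm f.hd.symm

theorem lift_map₂ [HasPullbacks C] {Z : C} {x y : Z ⟶ G.C1} (h : x ≫ G.c = y ≫ G.d) :
    pullback.lift x y h ≫ f.map₂ = pullback.lift (x ≫ f.f1) (y ≫ f.f1) (f.composable h) := by
  ext <;> simp [map₂]

section Regular

variable [Regular C] [MaltsevCat C] [IsRegularEpi f.f1]

instance isRegularEpi_lift_d :
    IsRegularEpi (pullback.lift G.d f.f1 f.hd.symm : G.C1 ⟶ pullback f.f0 H.d) :=
  MaltsevCat.isRegularEpi_pullback_lift G.ed f.hd.symm f.he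

instance isRegularEpi_map₂ : IsRegularEpi f.map₂ := by
  -- `map₂` factors through `G₁ ×_{G₀} (G₀ ×_{H₀} H₁)` as a base change of
  -- `G₁ → G₀ ×_{H₀} H₁` followed by a base change of `f.f1`
  let p₁ : pullback G.c G.d ⟶ pullback G.c (pullback.fst f.f0 H.d) :=
    pullback.lift (pullback.fst _ _) (pullback.snd _ _ ≫ pullback.lift G.d f.f1 f.hd.symm)
      (by simp [pullback.condition])
  let p₂ : pullback G.c (pullback.fst f.f0 H.d) ⟶ pullback H.c H.d :=
    pullback.lift (pullback.fst _ _ ≫ f.f1) (pullback.snd _ _ ≫ pullback.snd _ _)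
      (by simp [f.hc, pullback.condition, pullback.condition_assoc])
  have h₁ : IsPullback p₁ (pullback.snd G.c G.d) (pullback.snd _ _)
      (pullback.lift G.d f.f1 f.hd.symm) :=
    .of_right (by simpa [p₁] using IsPullback.of_hasPullback G.c G.d) (by simp [p₁])
      (.of_hasPullback _ _)
  have h₂ : IsPullback p₂ (pullback.fst _ _) (pullback.fst H.c H.d) f.f1 :=
    .of_right (by simpa [p₂, f.hc] using ((IsPullback.of_hasPullback _ _).paste_vert
        (IsPullback.of_hasPullback f.f0 H.d)).flip)
      (by simp [p₂]) (IsPullback.of_hasPullback _ _).flip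
  have := Regular.isRegularEpi_of_isPullback h₁.flip
  have := Regular.isRegularEpi_of_isPullback h₂.flip
  have : f.map₂ = p₁ ≫ p₂ := by ext <;> simp [map₂, p₁, p₂]
  rw [this]
  infer_instance

theorem exists_cover_composable₃ {Z : C} {a b c : Z ⟶ H.C1} (hab : a ≫ H.c = b ≫ H.d)
    (hbc : b ≫ H.c = c ≫ H.d) :
    ∃ (P : C) (ρ : P ⟶ Z) (x y z : P ⟶ G.C1), Epi ρ ∧ x ≫ G.c = y ≫ G.d ∧ y ≫ G.c = z ≫ G.d ∧
      x ≫ f.f1 = ρ ≫ a ∧ y ≫ f.f1 = ρ ≫ b ∧ z ≫ f.f1 = ρ ≫ c := by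
  obtain ⟨P₁, ρ₁, q, _, hq⟩ := Regular.exists_epi_cover f.map₂ (pullback.lift a b hab)
  have hx := hq =≫ pullback.fst _ _
  have hy := hq =≫ pullback.snd _ _
  simp only [map₂, pullback.map, Category.assoc, pullback.lift_fst, pullback.lift_snd] at hx hy
  obtain ⟨P₂, ρ₂, z, _, hz⟩ := Regular.exists_epi_cover (pullback.lift G.d f.f1 f.hd.symm)
    (pullback.lift (q ≫ pullback.snd _ _ ≫ G.c) (ρ₁ ≫ c) (by simp [← f.hc, reassoc_of% hy, hbc]))
  have hzd := hz =≫ pullback.fst _ _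
  have hzf := hz =≫ pullback.snd _ _
  simp only [Category.assoc, pullback.lift_fst, pullback.lift_snd] at hzd hzf
  exact ⟨P₂, ρ₂ ≫ ρ₁, ρ₂ ≫ q ≫ pullback.fst _ _, ρ₂ ≫ q ≫ pullback.snd _ _, z, epi_comp _ _,
    by simp [pullback.condition], by simp [hzd], by simp [hx], by simp [hy], by simp [hzf]⟩

theorem exists_map₂_comp_eq (S : CatStruct G) (hS : S.HasInverses) :
    ∃ m : pullback H.c H.d ⟶ H.C1,
      f.map₂ ≫ m = S.comp (pullback.fst _ _) (pullback.snd _ _) pullback.condition ≫ f.f1 :=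
  ⟨EffectiveEpi.desc f.map₂ _ fun g₁ g₂ hg ↦ by
    have h₁ := hg =≫ pullback.fst _ _
    have h₂ := hg =≫ pullback.snd _ _
    simp only [Category.assoc, map₂, pullback.lift_fst, pullback.lift_snd, pullback.map] at h₁ h₂
    rw [← Category.assoc, ← Category.assoc,
      S.comp_natural g₁ _ _ _ (by simp [pullback.condition]),
      S.comp_natural g₂ _ _ _ (by simp [pullback.condition])]
    exact S.comp_map_congr hS f _ _ (by simpa using h₁) (by simpa using h₂),
   EffectiveEpi.fac _ _ _⟩

end Regular

section Quotient

variable {S : CatStruct G}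

theorem lift_comp_eq [HasPullbacks C] {m : pullback H.c H.d ⟶ H.C1}
    (hm : f.map₂ ≫ m = S.comp (pullback.fst _ _) (pullback.snd _ _) pullback.condition ≫ f.f1)
    {Z : C} {x y : Z ⟶ G.C1} (h : x ≫ G.c = y ≫ G.d) {a b : Z ⟶ H.C1}
    (hab : a ≫ H.c = b ≫ H.d) (ha : x ≫ f.f1 = a) (hb : y ≫ f.f1 = b) :
    pullback.lift a b hab ≫ m = S.comp x y h ≫ f.f1 := by
  subst ha hb
  rw [← f.lift_map₂ h, Category.assoc, hm, ← Category.assoc,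
    S.comp_natural _ _ _ _ (by simpa using h)]
  exact congrArg (· ≫ f.f1) (S.comp_congr (by simp) (by simp) _ h)

variable [Regular C] [IsRegularEpi f.f1] {m : pullback H.c H.d ⟶ H.C1}

theorem comp_d_eq [MaltsevCat C]
    (hm : f.map₂ ≫ m = S.comp (pullback.fst _ _) (pullback.snd _ _) pullback.condition ≫ f.f1) :
    m ≫ H.d = pullback.fst H.c H.d ≫ H.d := by
  rw [← cancel_epi f.map₂, reassoc_of% hm, f.hd, ← Category.assoc, S.comp_d]
  simp [map₂, f.hd]

theorem comp_c_eq [MaltsevCat C]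
    (hm : f.map₂ ≫ m = S.comp (pullback.fst _ _) (pullback.snd _ _) pullback.condition ≫ f.f1) :
    m ≫ H.c = pullback.snd H.c H.d ≫ H.c := by
  rw [← cancel_epi f.map₂, reassoc_of% hm, f.hc, ← Category.assoc, S.comp_c]
  simp [map₂, f.hc]

theorem lift_comp_unit_l
    (hm : f.map₂ ≫ m = S.comp (pullback.fst _ _) (pullback.snd _ _) pullback.condition ≫ f.f1)
    {Z : C} (a : Z ⟶ H.C1) (h : (a ≫ H.d ≫ H.e) ≫ H.c = a ≫ H.d) :
    pullback.lift (a ≫ H.d ≫ H.e) a h ≫ m = a := by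
  obtain ⟨P, ρ, x, _, hx⟩ := Regular.exists_epi_cover f.f1 a
  rw [← cancel_epi ρ, ← Category.assoc, comp_pullback_lift,
    f.lift_comp_eq hm (x := x ≫ G.d ≫ G.e) (y := x) (by simp [G.ec]) _
      (by rw [Category.assoc, Category.assoc, f.d_e_comp, reassoc_of% hx]) hx,
    S.comp_unit_l, hx]

theorem lift_comp_unit_r
    (hm : f.map₂ ≫ m = S.comp (pullback.fst _ _) (pullback.snd _ _) pullback.condition ≫ f.f1)
    {Z : C} (a : Z ⟶ H.C1) (h : a ≫ H.c = (a ≫ H.c ≫ H.e) ≫ H.d) :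
    pullback.lift a (a ≫ H.c ≫ H.e) h ≫ m = a := by
  obtain ⟨P, ρ, x, _, hx⟩ := Regular.exists_epi_cover f.f1 a
  rw [← cancel_epi ρ, ← Category.assoc, comp_pullback_lift,
    f.lift_comp_eq hm (x := x) (y := x ≫ G.c ≫ G.e) (by simp [G.ed]) _ hx
      (by rw [Category.assoc, Category.assoc, f.c_e_comp, reassoc_of% hx]),
    S.comp_unit_r, hx]

variable [MaltsevCat C]

theorem lift_comp_assoc
    (hm : f.map₂ ≫ m = S.comp (pullback.fst _ _) (pullback.snd _ _) pullback.condition ≫ f.f1)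
    {Z : C} (a b c : Z ⟶ H.C1) (h₁ : a ≫ H.c = b ≫ H.d) (h₂ : b ≫ H.c = c ≫ H.d)
    (h₃ : (pullback.lift a b h₁ ≫ m) ≫ H.c = c ≫ H.d)
    (h₄ : a ≫ H.c = (pullback.lift b c h₂ ≫ m) ≫ H.d) :
    pullback.lift (pullback.lift a b h₁ ≫ m) c h₃ ≫ m =
      pullback.lift a (pullback.lift b c h₂ ≫ m) h₄ ≫ m := by
  obtain ⟨P, ρ, x, y, z, _, hxy, hyz, hx, hy, hz⟩ := f.exists_cover_composable₃ h₁ h₂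
  have hxy' : S.comp x y hxy ≫ f.f1 = ρ ≫ pullback.lift a b h₁ ≫ m := by
    rw [← Category.assoc, comp_pullback_lift, f.lift_comp_eq hm hxy _ hx hy]
  have hyz' : S.comp y z hyz ≫ f.f1 = ρ ≫ pullback.lift b c h₂ ≫ m := by
    rw [← Category.assoc, comp_pullback_lift, f.lift_comp_eq hm hyz _ hy hz]
  rw [← cancel_epi ρ, ← Category.assoc, ← Category.assoc, comp_pullback_lift, comp_pullback_lift,
    f.lift_comp_eq hm (by rw [S.comp_c]; exact hyz) _ hxy' hz,
    f.lift_comp_eq hm (by rw [S.comp_d]; exact hxy) _ hx hyz', S.comp_assoc]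

noncomputable def quotientCatStruct
    (hm : f.map₂ ≫ m = S.comp (pullback.fst _ _) (pullback.snd _ _) pullback.condition ≫ f.f1) :
    CatStruct H where
  comp a b h := pullback.lift a b h ≫ m
  comp_natural w a b h h' := by rw [← Category.assoc, comp_pullback_lift]
  comp_d a b h := by rw [Category.assoc, f.comp_d_eq hm, pullback.lift_fst_assoc]
  comp_c a b h := by rw [Category.assoc, f.comp_c_eq hm, pullback.lift_snd_assoc]
  comp_unit_l a h := f.lift_comp_unit_l hm a h
  comp_unit_r a h := f.lift_comp_unit_r hm a h
  comp_assoc a b c h₁ h₂ h₃ h₄ := f.lift_comp_assoc hm a b c h₁ h₂ h₃ h₄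

theorem preservesComp_quotientCatStruct
    (hm : f.map₂ ≫ m = S.comp (pullback.fst _ _) (pullback.snd _ _) pullback.condition ≫ f.f1) :
    f.PreservesComp S (f.quotientCatStruct hm) :=
  fun _ _ h h' ↦ f.lift_comp_eq hm h h' rfl rfl

end Quotient

theorem exists_preservesComp [Regular C] [MaltsevCat C] [IsRegularEpi f.f1] (S : CatStruct G)
    (hS : S.HasInverses) : ∃ T : CatStruct H, f.PreservesComp S T :=
  let ⟨_, hm⟩ := f.exists_map₂_comp_eq S hS
  ⟨_, f.preservesComp_quotientCatStruct hm⟩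

variable {f} in
theorem PreservesComp.hasInverses [Regular C] [IsRegularEpi f.f1] {S : CatStruct G}
    {T : CatStruct H} (hf : f.PreservesComp S T) (hS : S.HasInverses) : T.HasInverses := by
  obtain ⟨i, hid, hic, hinv₁, hinv₂⟩ := hS
  have hi₁ : ∀ {Z : C} (x : Z ⟶ G.C1), x ≫ G.c = (x ≫ i) ≫ G.d := fun x ↦ by simp [hid]
  have hi₂ : ∀ {Z : C} (x : Z ⟶ G.C1), (x ≫ i) ≫ G.c = x ≫ G.d := fun x ↦ by simp [hic]
  have right_inv : ∀ {Z : C} (x : Z ⟶ G.C1) {a b : Z ⟶ H.C1} (hab : a ≫ H.c = b ≫ H.d),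
      x ≫ f.f1 = a → (x ≫ i) ≫ f.f1 = b → T.comp a b hab = a ≫ H.d ≫ H.e := by
    intro Z x a b hab ha hb
    rw [hf.comp_eq (hi₁ x) hab ha hb, hinv₁, ← ha]
    simp [f.d_e_comp]
  have left_inv : ∀ {Z : C} (x : Z ⟶ G.C1) {a b : Z ⟶ H.C1} (hab : a ≫ H.c = b ≫ H.d),
      (x ≫ i) ≫ f.f1 = a → x ≫ f.f1 = b → T.comp a b hab = b ≫ H.c ≫ H.e := by
    intro Z x a b hab ha hb
    rw [hf.comp_eq (hi₂ x) hab ha hb, hinv₂, ← hb]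
    simp [f.c_e_comp]
  -- `i` descends along `f.f1` because in `T` a right and a left inverse of an arrow agree
  have hdesc : ∀ {Z : C} (g₁ g₂ : Z ⟶ G.C1), g₁ ≫ f.f1 = g₂ ≫ f.f1 →
      g₁ ≫ i ≫ f.f1 = g₂ ≫ i ≫ f.f1 := by
    intro Z g₁ g₂ hg
    have hv := f.composable (hi₁ g₁)
    have hv' : ((g₂ ≫ i) ≫ f.f1) ≫ H.c = (g₁ ≫ f.f1) ≫ H.d := hg ▸ f.composable (hi₂ g₂)
    simpa using (T.left_inv_eq_right_inv hv hv' (right_inv g₁ hv rfl rfl)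
      (left_inv g₂ hv' rfl hg.symm)).symm
  let j := EffectiveEpi.desc f.f1 (i ≫ f.f1) hdesc
  have hj : f.f1 ≫ j = i ≫ f.f1 := EffectiveEpi.fac _ _ _
  refine ⟨j, ?_, ?_, fun a h ↦ ?_, fun a h ↦ ?_⟩
  · rw [← cancel_epi f.f1, reassoc_of% hj, f.hd, reassoc_of% hid, f.hc]
  · rw [← cancel_epi f.f1, reassoc_of% hj, f.hc, reassoc_of% hic, f.hd]
  all_goals
    obtain ⟨P, ρ, x, _, hx⟩ := Regular.exists_epi_cover f.f1 a
    have hxj : (x ≫ i) ≫ f.f1 = ρ ≫ a ≫ j := by rw [Category.assoc, ← hj, reassoc_of% hx]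
    rw [← cancel_epi ρ, T.comp_natural ρ _ _ h (by simp [h])]
  · rw [right_inv x _ hx (by simpa using hxj), Category.assoc]
  · rw [left_inv x _ (by simpa using hxj) hx, Category.assoc]

end RGHom

theorem stmt4_general {C : Type u} [Category.{v} C] [RegularCat C] [MaltsevCat C]
    (G H : ReflexiveGraph C) (f : RGHom G H)
    (h1 : Nonempty (RegularEpi f.f1))
    (S : CatStruct G) (hS : S.HasInverses) :
    ∃ T : CatStruct H, T.HasInverses := by
  have : IsRegularEpi f.f1 := ⟨h1⟩
  obtain ⟨T, hT⟩ := f.exists_preservesComp S hS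
  exact ⟨T, hT.hasInverses hS⟩

/-- In a regular Mal'tsev category, internal groupoids are closed under
regular quotients among reflexive graphs. -/
theorem stmt4 {C : Type u} [Category.{v} C] [RegularCat C] [MaltsevCat C]
    (G H : ReflexiveGraph C) (f : RGHom G H)
    (h0 : Nonempty (RegularEpi f.f0)) (h1 : Nonempty (RegularEpi f.f1))
    (S : CatStruct G) (hS : S.HasInverses) :
    ∃ T : CatStruct H, T.HasInverses :=
  stmt4_general G H f h1 S hS
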